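/- arXiv:2509.15564 — 3 statements merged into one kernel-verified Lean document; each statement's English description precedes it below -/
import Mathlib

section
/- For every positive integer N and all n, n' ∈ {0,…,N−1} with n ≠ n', the matrix U_n · U_{n'}ᴴ is diagonal: all of its off-diagonal entries are zero. -/
open Matrix Complex

/-- The normalized `N × N` DFT matrix: `U i j = ω^(i*j) / √N` with `ω = exp(2πi/N)`. -/
noncomputable def dftU (N : ℕ) : Matrix (Fin N) (Fin N) ℂ :=
  fun i j => Complex.exp (2 * Real.pi * Complex.I / (N : ℂ)) ^ (i.val * j.val) / (Real.sqrt N : ℂ)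

/-- The `n`-th circulant-permutation DFT (CP-DFT) matrix:
`U_n i j = U i ((j + n) mod N)`, where addition in `Fin N` is modulo `N`. -/
noncomputable def cpdft (N : ℕ) (n : Fin N) : Matrix (Fin N) (Fin N) ℂ :=
  fun i j => dftU N i (j + n)


/-- for `n ≠ n'`, the matrix `U_n * U_{n'}ᴴ` is diagonal:
all of its off-diagonal entries vanish. -/
theorem cpdft_mul_conjTranspose_isDiag (N : ℕ) (hN : 0 < N) (n n' : Fin N) (hnn' : n ≠ n')
    (i j : Fin N) (hij : i ≠ j) :
    (cpdft N n * (cpdft N n')ᴴ) i j = 0 := by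
  haveI : NeZero N := ⟨hN.ne'⟩
  set ζ : ℂ := Complex.exp (2 * Real.pi * Complex.I / (N : ℂ)) with hζdef
  have hprim : IsPrimitiveRoot ζ N := Complex.isPrimitiveRoot_exp N hN.ne'
  have hζN : ζ ^ N = 1 := hprim.pow_eq_one
  have hmod : ∀ {a b : ℕ}, a ≡ b [MOD N] → ζ ^ a = ζ ^ b := by
    intro a b h
    rw [← Nat.div_add_mod a N, ← Nat.div_add_mod b N, pow_add, pow_add,
      pow_mul, pow_mul, hζN, one_pow, one_pow, h]
  have hconj : (starRingEnd ℂ) ζ = ζ ^ (N - 1) := by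
    have h1 : ζ ^ (N - 1) * ζ = 1 := by
      rw [← pow_succ, Nat.sub_add_cancel hN, hζN]
    have h2 : (starRingEnd ℂ) ζ = ζ⁻¹ := by
      rw [hζdef, ← Complex.exp_conj, ← Complex.exp_neg]
      congr 1
      rw [map_div₀, _root_.map_mul, _root_.map_mul, Complex.conj_I, Complex.conj_ofReal, Complex.conj_natCast, map_ofNat]
      ring
    rw [h2]
    exact (eq_inv_of_mul_eq_one_left h1).symm
  set D : ℕ := i.val + (N - 1) * j.val with hD
  have hxne : ζ ^ D ≠ 1 := by
    intro hx
    have hdvd : N ∣ D := (hprim.pow_eq_one_iff_dvd D).mp hx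
    apply hij
    have hz : ((D : ℕ) : ZMod N) = 0 := (ZMod.natCast_eq_zero_iff D N).mpr hdvd
    rw [hD] at hz
    push_cast [Nat.cast_sub (Nat.one_le_iff_ne_zero.mpr hN.ne')] at hz
    rw [ZMod.natCast_self] at hz
    have h0 : ((i.val : ZMod N)) = (j.val : ZMod N) := by linear_combination hz
    have := congrArg ZMod.val h0
    rw [ZMod.val_cast_of_lt i.isLt, ZMod.val_cast_of_lt j.isLt] at this
    exact Fin.ext this
  set E : ℕ := i.val * n.val + (N - 1) * (j.val * n'.val) with hE
  set S : ℂ := (Real.sqrt N : ℂ) * (Real.sqrt N : ℂ) with hS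
  rw [Matrix.mul_apply]
  have hterm : ∀ k : Fin N,
      cpdft N n i k * (cpdft N n')ᴴ k j
        = (ζ ^ E / S) * (ζ ^ D) ^ k.val := by
    intro k
    have hrhs : (ζ ^ E / S) * (ζ ^ D) ^ k.val = ζ ^ (E + D * k.val) / S := by
      rw [← pow_mul, div_mul_eq_mul_div, ← pow_add]
    simp only [cpdft, dftU, conjTranspose_apply, Complex.star_def, map_div₀, map_pow, hconj,
      Complex.conj_ofReal, ← hζdef]
    rw [← pow_mul ζ (N - 1) (j.val * ((k + n' : Fin N)).val), div_mul_div_comm, ← pow_add,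
      hrhs, hS]
    congr 1
    apply hmod
    have h1 : ((k + n : Fin N).val) ≡ k.val + n.val [MOD N] := by
      rw [Fin.val_add]; exact Nat.mod_modEq _ N
    have h2 : ((k + n' : Fin N).val) ≡ k.val + n'.val [MOD N] := by
      rw [Fin.val_add]; exact Nat.mod_modEq _ N
    calc i.val * (k + n : Fin N).val + (N - 1) * (j.val * (k + n' : Fin N).val)
        ≡ i.val * (k.val + n.val) + (N - 1) * (j.val * (k.val + n'.val)) [MOD N] :=
          (h1.mul_left i.val).add ((h2.mul_left j.val).mul_left (N - 1))
      _ = E + D * k.val := by rw [hE, hD]; ring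
  calc (∑ k : Fin N, cpdft N n i k * (cpdft N n')ᴴ k j)
      = ∑ k : Fin N, (ζ ^ E / S) * (ζ ^ D) ^ k.val :=
        Finset.sum_congr rfl (fun k _ => hterm k)
    _ = (ζ ^ E / S) * ∑ k ∈ Finset.range N, (ζ ^ D) ^ k := by
        rw [← Finset.mul_sum, Fin.sum_univ_eq_sum_range (fun m => (ζ ^ D) ^ m) N]
    _ = 0 := by
        rw [geom_sum_eq hxne, ← pow_mul, mul_comm D N, pow_mul, hζN, one_pow,
          sub_self, zero_div, mul_zero]
end

section
/- Let N be a positive integer, let a, d ∈ ℂ^N be unit-modulus vectors, and let n, n' ∈ {0,…,N−1} with n ≠ n'. Then the interference term vanishes: aᴴ · U_n^* · diag(conj(d) ∘ d) · U_{n'}ᵀ · a = 0, where ∘ denotes the entrywise (Hadamard) product. -/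
/-!
Since `ω ^ N = 1`, shifting the column index of the DFT matrix by `n` multiplies row `i` by
`ω ^ (n * i)`, so `U_n = D_n U` with `D_n = diag (ω ^ (n * i))`. As `U` is unitary,
`U_{n'} U_nᴴ = D_{n'} D_nᴴ`, and the interference term is the transpose of this diagonal matrix
sandwiched between `aᴴ` and `a` (the `d`-diagonal being the identity). Because `|a i| = 1` it
equals `∑ i, (ω ^ n' * conj ω ^ n) ^ i`, a geometric sum of a nontrivial `N`-th root of unity.
-/

open Matrix Complex

open ComplexConjugate

theorem geom_sum_eq_zero_of_pow_eq_one {K : Type*} [Field K] {x : K} {N : ℕ} (hxN : x ^ N = 1)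
    (hx : x ≠ 1) : ∑ m ∈ Finset.range N, x ^ m = 0 := by
  rw [geom_sum_eq hx, hxN, sub_self, zero_div]

theorem IsPrimitiveRoot.sum_pow_mul_conj_pow {ζ : ℂ} {N : ℕ} (h : IsPrimitiveRoot ζ N)
    {i j : ℕ} (hi : i < N) (hj : j < N) :
    ∑ m : Fin N, ζ ^ (i * m) * conj (ζ ^ (j * m)) = if i = j then (N : ℂ) else 0 := by
  have hnorm (k : ℕ) : ‖ζ ^ k‖ = 1 := by rw [norm_pow, h.norm'_eq_one (by omega), one_pow]
  have hterm (m : ℕ) : ζ ^ (i * m) * conj (ζ ^ (j * m)) = (ζ ^ i * conj (ζ ^ j)) ^ m := by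
    rw [pow_mul, pow_mul, map_pow, mul_pow]
  simp only [hterm, Fin.sum_univ_eq_sum_range (fun m => (ζ ^ i * conj (ζ ^ j)) ^ m)]
  split_ifs with hij
  · subst hij
    rw [mul_conj', hnorm]
    simp
  · refine geom_sum_eq_zero_of_pow_eq_one ?_ fun hx => hij (h.pow_inj hi hj ?_)
    · rw [mul_pow, ← map_pow, ← pow_mul, ← pow_mul, mul_comm i, mul_comm j, pow_mul, pow_mul,
        h.pow_eq_one, one_pow, one_pow, map_one, one_mul]
    · calc ζ ^ i = ζ ^ i * conj (ζ ^ j) * ζ ^ j := by rw [mul_assoc, conj_mul', hnorm]; simp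
        _ = ζ ^ j := by rw [hx, one_mul]

noncomputable def dftRoot (N : ℕ) : ℂ := Complex.exp (2 * Real.pi * Complex.I / N)

theorem isPrimitiveRoot_dftRoot {N : ℕ} (hN : N ≠ 0) : IsPrimitiveRoot (dftRoot N) N :=
  Complex.isPrimitiveRoot_exp N hN

theorem dftU_apply (N : ℕ) (i j : Fin N) :
    dftU N i j = dftRoot N ^ (i.val * j.val) / (Real.sqrt N : ℂ) :=
  rfl

theorem dftU_mul_conjTranspose (N : ℕ) : dftU N * (dftU N)ᴴ = 1 := by
  ext i j
  have hω := isPrimitiveRoot_dftRoot (Fin.pos i).ne'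
  have hsqrt : (Real.sqrt N : ℂ) * conj (Real.sqrt N : ℂ) = N := by
    rw [conj_ofReal, ← ofReal_mul, Real.mul_self_sqrt (Nat.cast_nonneg N), ofReal_natCast]
  have hN : (N : ℂ) ≠ 0 := Nat.cast_ne_zero.mpr (Fin.pos i).ne'
  simp only [mul_apply, conjTranspose_apply, dftU_apply, Complex.star_def, map_div₀,
    div_mul_div_comm, hsqrt, ← Finset.sum_div, hω.sum_pow_mul_conj_pow i.isLt j.isLt, one_apply,
    Fin.val_inj]
  split_ifs <;> simp [hN]

theorem cpdft_eq_diagonal_mul_dftU (N : ℕ) (n : Fin N) :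
    cpdft N n = diagonal (fun i => dftRoot N ^ (n.val * i.val)) * dftU N := by
  ext i j
  have hω := isPrimitiveRoot_dftRoot (Fin.pos i).ne'
  have hωi : (dftRoot N ^ i.val) ^ N = 1 := by
    rw [← pow_mul, mul_comm, pow_mul, hω.pow_eq_one, one_pow]
  rw [diagonal_mul, cpdft, dftU_apply, dftU_apply, Fin.val_add, pow_mul, ← pow_eq_pow_mod _ hωi,
    ← pow_mul, mul_div_assoc', ← pow_add]
  ring_nf

theorem cpdft_mul_conjTranspose_cpdft (N : ℕ) (n n' : Fin N) :
    cpdft N n' * (cpdft N n)ᴴ =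
      diagonal (fun i => dftRoot N ^ (n'.val * i.val) * conj (dftRoot N ^ (n.val * i.val))) := by
  rw [cpdft_eq_diagonal_mul_dftU, cpdft_eq_diagonal_mul_dftU, conjTranspose_mul,
    diagonal_conjTranspose, mul_assoc, ← mul_assoc (dftU N), dftU_mul_conjTranspose, one_mul,
    diagonal_mul_diagonal]
  rfl

theorem star_dotProduct_diagonal_mulVec {𝕜 ι : Type*} [RCLike 𝕜] [Fintype ι] [DecidableEq ι]
    {a : ι → 𝕜} (ha : ∀ i, ‖a i‖ = 1) (c : ι → 𝕜) : star a ⬝ᵥ (diagonal c *ᵥ a) = ∑ i, c i := by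
  refine Finset.sum_congr rfl fun i _ => ?_
  rw [mulVec_diagonal, Pi.star_apply, RCLike.star_def, mul_left_comm, RCLike.conj_mul, ha i]
  simp

theorem interference_term_eq_zero_general (N : ℕ) (a d : Fin N → ℂ)
    (ha : ∀ i, ‖a i‖ = 1) (hd : ∀ i, ‖d i‖ = 1)
    (n n' : Fin N) (hnn' : n ≠ n') :
    star a ⬝ᵥ
      ((((cpdft N n)ᴴ)ᵀ *
          Matrix.diagonal (fun m => (starRingEnd ℂ) (d m) * d m) *
          (cpdft N n')ᵀ).mulVec a) = 0 := by
  have hdiag : diagonal (fun m => conj (d m) * d m) = 1 := by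
    simp only [conj_mul', hd, ofReal_one, one_pow, diagonal_one]
  rw [hdiag, Matrix.mul_one, ← transpose_mul, cpdft_mul_conjTranspose_cpdft, diagonal_transpose,
    star_dotProduct_diagonal_mulVec ha,
    (isPrimitiveRoot_dftRoot (Fin.pos n).ne').sum_pow_mul_conj_pow n'.isLt n.isLt,
    if_neg (Fin.val_ne_of_ne hnn'.symm)]

/-- for unit-modulus vectors `a, d` and `n ≠ n'` the interference term vanishes:
`aᴴ · U_n^* · diag(conj(d) ∘ d) · U_{n'}ᵀ · a = 0` (here `X^* = (Xᴴ)ᵀ` is the entrywise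
conjugate). -/
theorem interference_term_eq_zero (N : ℕ) (hN : 0 < N) (a d : Fin N → ℂ)
    (ha : ∀ i, ‖a i‖ = 1) (hd : ∀ i, ‖d i‖ = 1)
    (n n' : Fin N) (hnn' : n ≠ n') :
    star a ⬝ᵥ
      ((((cpdft N n)ᴴ)ᵀ *
          Matrix.diagonal (fun m => (starRingEnd ℂ) (d m) * d m) *
          (cpdft N n')ᵀ).mulVec a) = 0 :=
  interference_term_eq_zero_general N a d ha hd n n' hnn'
end

section
/- (Noisy combiner identity in Lemma 2's form.) Let N be a positive integer, s ∈ ℂ^N, p ∈ ℝ^N with p_j ≥ 0 for all j, g ∈ ℂ with g ≠ 0, z ∈ ℂ^N an arbitrary (noise) vector, and let a, d ∈ ℂ^N be unit-modulus vectors. For each m ∈ {0,…,N−1} define x_m(i) = (1/√N) Σ_{j=0}^{N−1} U_j(i,m) √(p_j) s_j and y_m = d_m · g · (Σ_{i=0}^{N−1} a_i x_m(i)) + z_m. Then for every n ∈ {0,…,N−1}, the combined signal c_n = (1/g) Σ_{m=0}^{N−1} (Σ_{i=0}^{N−1} conj(a_i) conj(U_n(i,m))) · conj(d_m) · y_m satisfies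 c_n = √(N p_n) · s_n + (1/g) Σ_{m=0}^{N−1} (Σ_{i=0}^{N−1} conj(a_i) conj(U_n(i,m))) · conj(d_m) · z_m. -/
/-!
Write `U = dftU N` and `W j = √(p j) * s j`. Since `U_j(i,m) = √N * U(i,j) * U(i,m)`, the
precoded samples are `x m i = U(i,m) * (U W)_i`, so the noiseless part of `y m` is
`d m * g * (M W)_m` for the effective channel `M = U * diag(a) * U`, while the combiner
coefficient of `y m` is `√N * conj (M(m,n)) * conj (d m)`. Now `U` is unitary and `a` is
unit-modulus, so `M` is unitary and `∑ m, conj (M(m,n)) * (M W)_m = (Mᴴ M W)_n = W n`; the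
phases `d m` cancel because `|d m| = 1`.
-/

open Matrix Complex Finset

open ComplexConjugate

theorem sum_fin_pow_eq_ite {K : Type*} [Field K] [DecidableEq K] {ζ : K} {N : ℕ}
    (hζ : ζ ^ N = 1) : ∑ j : Fin N, ζ ^ (j : ℕ) = if ζ = 1 then (N : K) else 0 := by
  rw [Fin.sum_univ_eq_sum_range (ζ ^ ·)]
  split_ifs with h
  · simp [h]
  · rw [geom_sum_eq h, hζ, sub_self, zero_div]

theorem diagonal_mem_unitaryGroup {𝕜 n : Type*} [RCLike 𝕜] [Fintype n] [DecidableEq n]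
    {a : n → 𝕜} (ha : ∀ i, ‖a i‖ = 1) : diagonal a ∈ unitaryGroup n 𝕜 := by
  rw [mem_unitaryGroup_iff, star_eq_conjTranspose, diagonal_conjTranspose, diagonal_mul_diagonal]
  simp [RCLike.mul_conj, ha]

theorem dftU_apply_comm {N : ℕ} (i j : Fin N) : dftU N i j = dftU N j i := by
  simp only [dftU, mul_comm]

theorem dftU_mem_unitaryGroup (N : ℕ) : dftU N ∈ unitaryGroup (Fin N) ℂ := by
  rw [mem_unitaryGroup_iff]
  ext i k
  have hN : N ≠ 0 := i.pos.ne'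
  set ω := Complex.exp (2 * Real.pi * Complex.I / N)
  have hω : IsPrimitiveRoot ω N := Complex.isPrimitiveRoot_exp N hN
  have hωω : ω * conj ω = 1 := by simp [Complex.mul_conj', hω.norm'_eq_one hN]
  set ζ := ω ^ (i : ℕ) * conj ω ^ (k : ℕ) with hζ_def
  have hζN : ζ ^ N = 1 := by
    rw [hζ_def, mul_pow, pow_right_comm, pow_right_comm (conj ω), ← map_pow, hω.pow_eq_one,
      map_one, one_pow, one_pow, one_mul]
  have hζ : ζ = 1 ↔ i = k := by
    have : ζ * ω ^ (k : ℕ) = ω ^ (i : ℕ) := by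
      rw [mul_assoc, ← mul_pow, mul_comm (conj ω), hωω, one_pow, mul_one]
    constructor
    · intro h
      rw [h, one_mul] at this
      exact Fin.ext (hω.pow_inj i.isLt k.isLt this.symm)
    · rintro rfl
      rw [hζ_def, ← mul_pow, hωω, one_pow]
  have hsqrt : (Real.sqrt N : ℂ) * (Real.sqrt N : ℂ) = N := by
    rw [← Complex.ofReal_mul, Real.mul_self_sqrt (Nat.cast_nonneg N), Complex.ofReal_natCast]
  calc (dftU N * star (dftU N)) i k = (∑ j : Fin N, ζ ^ (j : ℕ)) / N := by
        simp only [mul_apply, star_apply, dftU, Complex.star_def, map_div₀, Complex.conj_ofReal,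
          map_pow, sum_div]
        refine sum_congr rfl fun j _ => ?_
        rw [div_mul_div_comm, hsqrt, hζ_def, mul_pow, ← pow_mul, ← pow_mul]
    _ = (1 : Matrix (Fin N) (Fin N) ℂ) i k := by
        rw [sum_fin_pow_eq_ite hζN, one_apply]
        simp only [hζ]
        split_ifs <;> simp [hN]

theorem sum_star_mul_mulVec_of_mem_unitaryGroup {α n : Type*} [CommRing α] [StarRing α]
    [Fintype n] [DecidableEq n] {M : Matrix n n α} (hM : M ∈ unitaryGroup n α) (v : n → α)
    (k : n) : ∑ m, star (M m k) * (M *ᵥ v) m = v k := by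
  change (star M *ᵥ (M *ᵥ v)) k = v k
  rw [mulVec_mulVec, mem_unitaryGroup_iff'.mp hM, one_mulVec]

theorem cpdft_apply {N : ℕ} (n i m : Fin N) :
    cpdft N n i m = Real.sqrt N * dftU N i n * dftU N i m := by
  have hN : N ≠ 0 := i.pos.ne'
  have hω := Complex.isPrimitiveRoot_exp N hN
  have hωi : (Complex.exp (2 * Real.pi * Complex.I / N) ^ (i : ℕ)) ^ N = 1 := by
    rw [pow_right_comm, hω.pow_eq_one, one_pow]
  have hsqrt : (Real.sqrt N : ℂ) ≠ 0 := by simp [hN]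
  simp only [cpdft, dftU, Fin.val_add, pow_mul, ← pow_eq_pow_mod _ hωi, pow_add]
  field_simp

noncomputable def effectiveChannel (N : ℕ) (a : Fin N → ℂ) : Matrix (Fin N) (Fin N) ℂ :=
  dftU N * diagonal a * dftU N

theorem effectiveChannel_mem_unitaryGroup {N : ℕ} {a : Fin N → ℂ} (ha : ∀ i, ‖a i‖ = 1) :
    effectiveChannel N a ∈ unitaryGroup (Fin N) ℂ :=
  mul_mem (mul_mem (dftU_mem_unitaryGroup N) (diagonal_mem_unitaryGroup ha))
    (dftU_mem_unitaryGroup N)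

theorem sum_mul_precode_eq_effectiveChannel_mulVec {N : ℕ} (a W : Fin N → ℂ) (m : Fin N) :
    ∑ i, a i * ((1 / (Real.sqrt N : ℂ)) * ∑ j, cpdft N j i m * W j)
      = (effectiveChannel N a *ᵥ W) m := by
  have hsqrt : (Real.sqrt N : ℂ) ≠ 0 := by simp [m.pos.ne']
  rw [effectiveChannel, ← mulVec_mulVec, ← mulVec_mulVec]
  change _ = ∑ i, dftU N m i * (diagonal a *ᵥ (dftU N *ᵥ W)) i
  refine sum_congr rfl fun i _ => ?_
  rw [mulVec_diagonal]
  simp only [mulVec, dotProduct, cpdft_apply, mul_sum, dftU_apply_comm m i]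
  refine sum_congr rfl fun j _ => ?_
  field_simp

theorem sum_conj_mul_conj_cpdft {N : ℕ} (a : Fin N → ℂ) (n m : Fin N) :
    ∑ i, conj (a i) * conj (cpdft N n i m) = Real.sqrt N * star (effectiveChannel N a m n) := by
  rw [effectiveChannel, mul_apply]
  simp only [mul_diagonal, map_sum, mul_sum, cpdft_apply, map_mul,
    Complex.conj_ofReal, Complex.star_def, dftU_apply_comm m]
  refine sum_congr rfl fun i _ => ?_
  ring

theorem noisy_combiner_identity_general (N : ℕ)
    (s : Fin N → ℂ) (p : Fin N → ℝ)
    (g : ℂ) (hg : g ≠ 0) (z : Fin N → ℂ)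
    (a d : Fin N → ℂ) (ha : ∀ i, ‖a i‖ = 1) (hd : ∀ m, ‖d m‖ = 1)
    (x : Fin N → Fin N → ℂ)
    (hx : ∀ m i, x m i =
      (1 / (Real.sqrt N : ℂ)) * ∑ j, cpdft N j i m * (Real.sqrt (p j) : ℂ) * s j)
    (y : Fin N → ℂ)
    (hy : ∀ m, y m = d m * g * (∑ i, a i * x m i) + z m)
    (c : Fin N → ℂ)
    (hc : ∀ n, c n = (1 / g) * ∑ m,
      (∑ i, (starRingEnd ℂ) (a i) * (starRingEnd ℂ) (cpdft N n i m)) *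
        (starRingEnd ℂ) (d m) * y m) :
    ∀ n, c n = (Real.sqrt ((N : ℝ) * p n) : ℂ) * s n +
      (1 / g) * ∑ m,
        (∑ i, (starRingEnd ℂ) (a i) * (starRingEnd ℂ) (cpdft N n i m)) *
          (starRingEnd ℂ) (d m) * z m := by
  intro n
  set W : Fin N → ℂ := fun j => Real.sqrt (p j) * s j
  have hsignal : ∀ m, ∑ i, a i * x m i = (effectiveChannel N a *ᵥ W) m := fun m => by
    rw [← sum_mul_precode_eq_effectiveChannel_mulVec]
    simp only [hx, mul_assoc, W]
  have hconj_d : ∀ m, conj (d m) * d m = 1 := fun m => by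
    rw [mul_comm, Complex.mul_conj', hd, Complex.ofReal_one, one_pow]
  have hreceived : ∀ m, (∑ i, conj (a i) * conj (cpdft N n i m)) * conj (d m) * y m
      = g * (Real.sqrt N * (star (effectiveChannel N a m n) * (effectiveChannel N a *ᵥ W) m))
        + (∑ i, conj (a i) * conj (cpdft N n i m)) * conj (d m) * z m := fun m => by
    rw [hy, hsignal, sum_conj_mul_conj_cpdft]
    linear_combination
      (g * Real.sqrt N * star (effectiveChannel N a m n) * (effectiveChannel N a *ᵥ W) m) * hconj_d m
  rw [hc, sum_congr rfl fun m _ => hreceived m, sum_add_distrib, ← mul_sum, ← mul_sum,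
    sum_star_mul_mulVec_of_mem_unitaryGroup (effectiveChannel_mem_unitaryGroup ha),
    Real.sqrt_mul (Nat.cast_nonneg N), Complex.ofReal_mul]
  field_simp
  ring

/-- noisy combiner identity in Lemma 2's form: with precoding as before and
noisy received samples `y m = d m · g · (∑ i, a i · x m i) + z m`, the combined signal satisfies
`c n = √(N p_n) · s n + (1/g) ∑ m (∑ i, conj (a i) conj (U_n(i,m))) conj (d m) z m`. -/
theorem noisy_combiner_identity (N : ℕ) (hN : 0 < N)
    (s : Fin N → ℂ) (p : Fin N → ℝ) (hp : ∀ j, 0 ≤ p j)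
    (g : ℂ) (hg : g ≠ 0) (z : Fin N → ℂ)
    (a d : Fin N → ℂ) (ha : ∀ i, ‖a i‖ = 1) (hd : ∀ m, ‖d m‖ = 1)
    (x : Fin N → Fin N → ℂ)
    (hx : ∀ m i, x m i =
      (1 / (Real.sqrt N : ℂ)) * ∑ j, cpdft N j i m * (Real.sqrt (p j) : ℂ) * s j)
    (y : Fin N → ℂ)
    (hy : ∀ m, y m = d m * g * (∑ i, a i * x m i) + z m)
    (c : Fin N → ℂ)
    (hc : ∀ n, c n = (1 / g) * ∑ m,
      (∑ i, (starRingEnd ℂ) (a i) * (starRingEnd ℂ) (cpdft N n i m)) *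
        (starRingEnd ℂ) (d m) * y m) :
    ∀ n, c n = (Real.sqrt ((N : ℝ) * p n) : ℂ) * s n +
      (1 / g) * ∑ m,
        (∑ i, (starRingEnd ℂ) (a i) * (starRingEnd ℂ) (cpdft N n i m)) *
          (starRingEnd ℂ) (d m) * z m :=
  noisy_combiner_identity_general N s p g hg z a d ha hd x hx y hy c hc
end
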